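/- Let $f : \mathbb{R}^n \to \mathbb{R}_+$ be continuous, not identically zero, with Gaussian decay (there exist $C, \delta > 0$ with $f(z) \le C e^{-\delta|z|^2}$). For $s > 0$ set $p_s = 1 - e^{-2s}$, $q_s = 1 - e^{2s}$, and $F^{(s)}(x) := \int_{\mathbb{R}^n} e^{\frac1{p_s}\langle x, z\rangle} f(z)^{1/p_s}\, dz$. Then for every $x \in \mathbb{R}^n$, $\lim_{s \to 0} F^{(s)}(x)^{q_s} = \big( \sup_{z \in \mathbb{R}^n} e^{\langle x, z\rangle} f(z) \big)^{-1} = f^\circ(x)$. -/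

import Mathlib

/-!
Put `g(z) = e^{⟨x,z⟩} f(z)` and `p = p_s`. Then `F^{(s)}(x) = ∫ g^{1/p}` and `q_s = -p e^{2s}`, so
`F^{(s)}(x)^{q_s} = (‖g‖_{1/p})^{-e^{2s}}`, and it suffices that `‖g‖_r → sup g` as `r → ∞`.
Gaussian decay makes `g` integrable and bounded. For such `g` the bound `g^r ≤ (ess sup g)^{r-1} g`
gives `limsup ‖g‖_r ≤ ess sup g`, and Chebyshev's inequality on `{g ≥ b}` gives `liminf ‖g‖_r ≥ b`
for every `b < ess sup g`. By continuity of `g`, its essential supremum is its supremum, whose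
inverse is `f°(x)`.
-/

open MeasureTheory Real Filter
open scoped ENNReal Topology

noncomputable section

/-- The polar (dual) function `f°(x) = inf_y exp(-⟨x,y⟩)/f(y)`, valued in `[0,∞]`. -/
def polarFn {n : ℕ} (f : EuclideanSpace ℝ (Fin n) → ℝ) (x : EuclideanSpace ℝ (Fin n)) : ℝ≥0∞ :=
  ⨅ y : EuclideanSpace ℝ (Fin n),
    ENNReal.ofReal (Real.exp (-(inner ℝ x y : ℝ))) / ENNReal.ofReal (f y)

/-- `F^{(s)}(x) = ∫ e^{⟨x,z⟩/p_s} f(z)^{1/p_s} dz` with `p_s = 1 - e^{-2s}`. -/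
def expTransformS {n : ℕ} (s : ℝ) (f : EuclideanSpace ℝ (Fin n) → ℝ)
    (x : EuclideanSpace ℝ (Fin n)) : ℝ≥0∞ :=
  ∫⁻ z, ENNReal.ofReal (Real.exp ((1 / (1 - Real.exp (-2 * s))) * (inner ℝ x z : ℝ))) *
    ENNReal.ofReal (f z) ^ (1 / (1 - Real.exp (-2 * s)))

open scoped InnerProductSpace

theorem Continuous.essSup_eq_iSup {X β : Type*} [TopologicalSpace X] [MeasurableSpace X]
    {μ : Measure X} [μ.IsOpenPosMeasure] [CompleteLinearOrder β] [TopologicalSpace β]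
    [FirstCountableTopology β] [OrderTopology β] {g : X → β} (hg : Continuous g) :
    essSup g μ = ⨆ x, g x := by
  refine le_antisymm (essSup_le_of_ae_le _ (.of_forall fun x => le_iSup g x))
    (iSup_le fun x => ?_)
  have hempty : {y | essSup g μ < g y} = ∅ :=
    ((isOpen_lt continuous_const hg).measure_eq_zero_iff μ).1 meas_essSup_lt
  exact not_lt.1 fun hx => hempty.subset hx

theorem Filter.Tendsto.ennrpow {α : Type*} {l : Filter α} {u : α → ℝ≥0∞} {v : α → ℝ}
    {a : ℝ≥0∞} {y : ℝ} (hu : Tendsto u l (𝓝 a)) (hv : Tendsto v l (𝓝 y)) (ha0 : a ≠ 0)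
    (ha : a ≠ ⊤) : Tendsto (fun i => u i ^ v i) l (𝓝 (a ^ y)) := by
  lift a to NNReal using ha
  have ha0' : a ≠ 0 := by exact_mod_cast ha0
  have hnn : Tendsto (fun i => (u i).toNNReal ^ v i) l (𝓝 (a ^ y)) :=
    (NNReal.continuousAt_rpow (Or.inl ha0')).tendsto.comp
      (((ENNReal.tendsto_toNNReal ENNReal.coe_ne_top).comp hu).prodMk_nhds hv)
  rw [← ENNReal.coe_rpow_of_ne_zero ha0']
  refine (ENNReal.tendsto_coe.2 hnn).congr' ?_
  filter_upwards [hu.eventually_ne ha0, hu.eventually_ne ENNReal.coe_ne_top] with i h0 htop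
  lift u i to NNReal using htop with w
  rw [ENNReal.toNNReal_coe, ENNReal.coe_rpow_of_ne_zero (by exact_mod_cast h0)]

section LpNormToEssSup

variable {X : Type*} [MeasurableSpace X] {μ : Measure X} {G : X → ℝ≥0∞}

theorem rpow_lintegral_rpow_one_div_le (hG : AEMeasurable G μ) {p : ℝ} (hp0 : 0 < p)
    (hp1 : p ≤ 1) :
    (∫⁻ x, G x ^ (1 / p) ∂μ) ^ p ≤ essSup G μ ^ (1 - p) * (∫⁻ x, G x ∂μ) ^ p := by
  have hexp : 0 ≤ 1 / p - 1 := by rw [sub_nonneg, le_div_iff₀ hp0]; linarith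
  have hpt : ∀ᵐ x ∂μ, G x ^ (1 / p) ≤ essSup G μ ^ (1 / p - 1) * G x := by
    filter_upwards [ae_le_essSup (f := G)] with x hx
    calc G x ^ (1 / p) = G x ^ (1 / p - 1) * G x ^ (1 : ℝ) := by
          rw [← ENNReal.rpow_add_of_nonneg _ _ hexp zero_le_one, sub_add_cancel]
      _ ≤ essSup G μ ^ (1 / p - 1) * G x := by
          rw [ENNReal.rpow_one]; gcongr
  calc (∫⁻ x, G x ^ (1 / p) ∂μ) ^ p
      ≤ (essSup G μ ^ (1 / p - 1) * ∫⁻ x, G x ∂μ) ^ p := by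
        rw [← lintegral_const_mul'' _ hG]
        exact ENNReal.rpow_le_rpow (lintegral_mono_ae hpt) hp0.le
    _ = essSup G μ ^ (1 - p) * (∫⁻ x, G x ∂μ) ^ p := by
        rw [ENNReal.mul_rpow_of_nonneg _ _ hp0.le, ← ENNReal.rpow_mul]
        congr 2
        field_simp

theorem mul_measure_rpow_le_rpow_lintegral_rpow_one_div (hG : AEMeasurable G μ) (b : ℝ≥0∞)
    {p : ℝ} (hp0 : 0 < p) :
    b * μ {x | b ≤ G x} ^ p ≤ (∫⁻ x, G x ^ (1 / p) ∂μ) ^ p := by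
  have hsub : {x | b ≤ G x} ⊆ {x | b ^ (1 / p) ≤ G x ^ (1 / p)} := fun x hx =>
    ENNReal.rpow_le_rpow hx (by positivity)
  calc b * μ {x | b ≤ G x} ^ p = (b ^ (1 / p) * μ {x | b ≤ G x}) ^ p := by
        rw [ENNReal.mul_rpow_of_nonneg _ _ hp0.le, ← ENNReal.rpow_mul, one_div_mul_cancel hp0.ne',
          ENNReal.rpow_one]
    _ ≤ (b ^ (1 / p) * μ {x | b ^ (1 / p) ≤ G x ^ (1 / p)}) ^ p := by gcongr
    _ ≤ (∫⁻ x, G x ^ (1 / p) ∂μ) ^ p :=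
        ENNReal.rpow_le_rpow (mul_meas_ge_le_lintegral₀ (hG.pow_const _) _) hp0.le

theorem tendsto_rpow_lintegral_rpow_one_div_essSup (hG : AEMeasurable G μ)
    (hI : ∫⁻ x, G x ∂μ ≠ ⊤) (hS0 : essSup G μ ≠ 0) (hS : essSup G μ ≠ ⊤) :
    Tendsto (fun p : ℝ => (∫⁻ x, G x ^ (1 / p) ∂μ) ^ p) (𝓝[>] 0) (𝓝 (essSup G μ)) := by
  have hI0 : ∫⁻ x, G x ∂μ ≠ 0 := fun h => hS0 <| by
    rw [essSup_congr_ae ((lintegral_eq_zero_iff' hG).1 h)]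
    exact essSup_const_bot
  have hid : Tendsto (fun p : ℝ => p) (𝓝[>] 0) (𝓝 0) := nhdsWithin_le_nhds
  refine tendsto_of_le_liminf_of_limsup_le ?_ ?_
  · refine le_of_forall_lt_imp_le_of_dense fun b hb => ?_
    rcases eq_or_ne b 0 with rfl | hb0
    · exact zero_le
    have hE0 : μ {x | b ≤ G x} ≠ 0 := fun h => hb.not_ge <|
      essSup_le_of_ae_le b (ae_iff.2 (by simpa only [not_lt] using h) |>.mono fun _ => le_of_lt)
    have hE : μ {x | b ≤ G x} ≠ ⊤ := fun h => hI <| top_le_iff.1 <| by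
      simpa [h, ENNReal.mul_top hb0] using mul_meas_ge_le_lintegral₀ hG b
    have hlim : Tendsto (fun p : ℝ => b * μ {x | b ≤ G x} ^ p) (𝓝[>] 0) (𝓝 b) := by
      simpa using ENNReal.Tendsto.const_mul (tendsto_const_nhds.ennrpow hid hE0 hE)
        (Or.inl (by simp))
    calc b = liminf (fun p : ℝ => b * μ {x | b ≤ G x} ^ p) (𝓝[>] 0) := hlim.liminf_eq.symm
      _ ≤ _ := liminf_le_liminf <| eventually_mem_nhdsWithin.mono fun p hp =>
          mul_measure_rpow_le_rpow_lintegral_rpow_one_div hG b hp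
  · have hlim : Tendsto (fun p : ℝ => essSup G μ ^ (1 - p) * (∫⁻ x, G x ∂μ) ^ p) (𝓝[>] 0)
        (𝓝 (essSup G μ)) := by
      simpa using ENNReal.Tendsto.mul (tendsto_const_nhds.ennrpow (hid.const_sub 1) hS0 hS)
        (Or.inl (by simpa using hS0)) (tendsto_const_nhds.ennrpow hid hI0 hI) (Or.inl (by simp))
    calc limsup _ (𝓝[>] 0)
        ≤ limsup (fun p : ℝ => essSup G μ ^ (1 - p) * (∫⁻ x, G x ∂μ) ^ p) (𝓝[>] 0) :=
          limsup_le_limsup <| Filter.eventually_of_mem (Ioc_mem_nhdsGT one_pos) fun p hp =>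
            rpow_lintegral_rpow_one_div_le hG hp.1 hp.2
      _ = essSup G μ := hlim.limsup_eq

end LpNormToEssSup

theorem tendsto_rpow_one_sub_exp_two_mul {A : ℝ → ℝ≥0∞} {S : ℝ≥0∞}
    (hA : Tendsto (fun p => A p ^ p) (𝓝[>] 0) (𝓝 S)) (hS0 : S ≠ 0) (hS : S ≠ ⊤) :
    Tendsto (fun s : ℝ => A (1 - exp (-2 * s)) ^ (1 - exp (2 * s))) (𝓝[>] 0) (𝓝 S⁻¹) := by
  have hp : Tendsto (fun s : ℝ => 1 - exp (-2 * s)) (𝓝[>] 0) (𝓝[>] 0) := by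
    refine tendsto_nhdsWithin_of_tendsto_nhds_of_eventually_within _ ?_ ?_
    · have : Continuous fun s : ℝ => 1 - exp (-2 * s) := by fun_prop
      simpa using (this.tendsto 0).mono_left nhdsWithin_le_nhds
    · filter_upwards [self_mem_nhdsWithin] with s (hs : 0 < s)
      simpa using exp_lt_one_iff.2 (by linarith : -2 * s < 0)
  have hq : Tendsto (fun s : ℝ => -exp (2 * s)) (𝓝[>] 0) (𝓝 (-1)) := by
    have : Continuous fun s : ℝ => -exp (2 * s) := by fun_prop
    simpa using (this.tendsto 0).mono_left nhdsWithin_le_nhds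
  rw [← ENNReal.rpow_neg_one]
  refine (Tendsto.ennrpow (hA.comp hp) hq hS0 hS).congr fun s => ?_
  have hexp : exp (-2 * s) * exp (2 * s) = 1 := by rw [← exp_add]; simp
  rw [Function.comp_apply, ← ENNReal.rpow_mul]
  congr 1
  linear_combination hexp

section GaussianDecay

variable {V : Type*} [NormedAddCommGroup V] [InnerProductSpace ℝ V] {f : V → ℝ} {C δ : ℝ}

theorem neg_mul_sq_norm_add_inner_le (hδ : 0 < δ) (x z : V) :
    -δ * ‖z‖ ^ 2 + ⟪x, z⟫_ℝ ≤ ‖x‖ ^ 2 / (4 * δ) := by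
  rw [le_div_iff₀ (by positivity)]
  nlinarith [sq_nonneg (2 * δ * ‖z‖ - ‖x‖), real_inner_le_norm x z]

theorem exp_inner_mul_le_of_le (hf : ∀ z, f z ≤ C * exp (-δ * ‖z‖ ^ 2)) (x z : V) :
    exp ⟪x, z⟫_ℝ * f z ≤ C * exp (-δ * ‖z‖ ^ 2 + ⟪x, z⟫_ℝ) := by
  calc exp ⟪x, z⟫_ℝ * f z ≤ exp ⟪x, z⟫_ℝ * (C * exp (-δ * ‖z‖ ^ 2)) := by gcongr; exact hf z
    _ = C * exp (-δ * ‖z‖ ^ 2 + ⟪x, z⟫_ℝ) := by rw [exp_add]; ring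

theorem iSup_ofReal_exp_inner_mul_ne_top (hC : 0 ≤ C) (hδ : 0 < δ)
    (hf : ∀ z, f z ≤ C * exp (-δ * ‖z‖ ^ 2)) (x : V) :
    ⨆ z, ENNReal.ofReal (exp ⟪x, z⟫_ℝ * f z) ≠ ⊤ := by
  refine ne_top_of_le_ne_top (b := ENNReal.ofReal (C * exp (‖x‖ ^ 2 / (4 * δ))))
    ENNReal.ofReal_ne_top (iSup_le fun z => ENNReal.ofReal_le_ofReal ?_)
  grw [exp_inner_mul_le_of_le hf, neg_mul_sq_norm_add_inner_le hδ]

theorem integrable_exp_neg_mul_sq_norm_add_inner [FiniteDimensional ℝ V] [MeasurableSpace V]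
    [BorelSpace V] (hδ : 0 < δ) (x : V) :
    Integrable fun z : V => exp (-δ * ‖z‖ ^ 2 + ⟪x, z⟫_ℝ) := by
  have hδ' : 0 < (δ : ℂ).re := by simpa using hδ
  refine (GaussianFourier.integrable_cexp_neg_mul_sq_norm_add hδ' 1 x).norm.congr
    (.of_forall fun z => ?_)
  beta_reduce
  rw [Complex.norm_exp, one_mul]
  norm_cast

theorem lintegral_ofReal_exp_inner_mul_ne_top [FiniteDimensional ℝ V] [MeasurableSpace V]
    [BorelSpace V] (hδ : 0 < δ) (hf : ∀ z, f z ≤ C * exp (-δ * ‖z‖ ^ 2)) (x : V) :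
    ∫⁻ z, ENNReal.ofReal (exp ⟪x, z⟫_ℝ * f z) ≠ ⊤ :=
  ne_top_of_le_ne_top
    ((integrable_exp_neg_mul_sq_norm_add_inner hδ x).const_mul C).lintegral_lt_top.ne
    (lintegral_mono fun z => ENNReal.ofReal_le_ofReal (exp_inner_mul_le_of_le hf x z))

end GaussianDecay

theorem expTransformS_eq_lintegral {n : ℕ} (f : EuclideanSpace ℝ (Fin n) → ℝ)
    (x : EuclideanSpace ℝ (Fin n)) {s : ℝ} (hs : 0 ≤ s) :
    expTransformS s f x =
      ∫⁻ z, ENNReal.ofReal (exp ⟪x, z⟫_ℝ * f z) ^ (1 / (1 - exp (-2 * s))) := by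
  have hp : 0 ≤ 1 / (1 - exp (-2 * s)) := by
    simpa using exp_le_one_iff.2 (by linarith : -2 * s ≤ 0)
  refine lintegral_congr fun z => ?_
  rw [ENNReal.ofReal_mul (exp_pos _).le, ENNReal.mul_rpow_of_nonneg _ _ hp, mul_comm _ ⟪x, z⟫_ℝ,
    exp_mul, ENNReal.ofReal_rpow_of_pos (exp_pos _)]

theorem inv_iSup_ofReal_exp_inner_mul_eq_polarFn {n : ℕ} (f : EuclideanSpace ℝ (Fin n) → ℝ)
    (x : EuclideanSpace ℝ (Fin n)) :
    (⨆ z, ENNReal.ofReal (exp ⟪x, z⟫_ℝ * f z))⁻¹ = polarFn f x := by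
  rw [polarFn, ENNReal.inv_iSup]
  refine iInf_congr fun z => ?_
  rw [exp_neg, ENNReal.ofReal_inv_of_pos (exp_pos _), div_eq_mul_inv,
    ENNReal.ofReal_mul (exp_pos _).le,
    ENNReal.mul_inv (.inl (by simpa using exp_pos _)) (.inl ENNReal.ofReal_ne_top)]

theorem pointwise_limit_to_polar_general (n : ℕ)
    (f : EuclideanSpace ℝ (Fin n) → ℝ)
    (hc : Continuous f) (hpos : ∀ z, 0 ≤ f z) (hne : ∃ z, f z ≠ 0)
    (hdec : ∃ C δ : ℝ, 0 < C ∧ 0 < δ ∧ ∀ z, f z ≤ C * Real.exp (-δ * ‖z‖ ^ 2))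
    (x : EuclideanSpace ℝ (Fin n)) :
    Tendsto (fun s : ℝ => expTransformS s f x ^ (1 - Real.exp (2 * s)))
        (𝓝[>] (0 : ℝ)) (𝓝 (polarFn f x)) ∧
      (⨆ z, ENNReal.ofReal (Real.exp ((inner ℝ x z : ℝ)) * f z))⁻¹ = polarFn f x := by
  obtain ⟨C, δ, hC, hδ, hf⟩ := hdec
  set G : EuclideanSpace ℝ (Fin n) → ℝ≥0∞ := fun z => ENNReal.ofReal (exp ⟪x, z⟫_ℝ * f z)
  have hG : Continuous G :=
    ENNReal.continuous_ofReal.comp ((continuous_const.inner continuous_id).rexp.mul hc)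
  have hS : essSup G volume = ⨆ z, G z := hG.essSup_eq_iSup
  have hS0 : ⨆ z, G z ≠ 0 := by
    obtain ⟨z, hz⟩ := hne
    have hGz : 0 < G z := ENNReal.ofReal_pos.2 (mul_pos (exp_pos _) ((hpos z).lt_of_ne' hz))
    exact (hGz.trans_le (le_iSup G z)).ne'
  have hS_top : ⨆ z, G z ≠ ⊤ := iSup_ofReal_exp_inner_mul_ne_top hC.le hδ hf x
  have hlim := tendsto_rpow_lintegral_rpow_one_div_essSup hG.measurable.aemeasurable
    (lintegral_ofReal_exp_inner_mul_ne_top hδ hf x) (hS ▸ hS0) (hS ▸ hS_top)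
  rw [hS] at hlim
  rw [← inv_iSup_ofReal_exp_inner_mul_eq_polarFn]
  refine ⟨(tendsto_rpow_one_sub_exp_two_mul hlim hS0 hS_top).congr' ?_, rfl⟩
  filter_upwards [self_mem_nhdsWithin] with s (hs : 0 < s)
  rw [expTransformS_eq_lintegral f x hs.le]

/-- Pointwise limit (2.2): with `p_s = 1 - e^{-2s}`, `q_s = 1 - e^{2s}`,
`F^{(s)}(x)^{q_s} → (sup_z e^{⟨x,z⟩} f(z))⁻¹ = f°(x)` as `s → 0`. -/
theorem pointwise_limit_to_polar (n : ℕ) (hn : 1 ≤ n)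
    (f : EuclideanSpace ℝ (Fin n) → ℝ)
    (hc : Continuous f) (hpos : ∀ z, 0 ≤ f z) (hne : ∃ z, f z ≠ 0)
    (hdec : ∃ C δ : ℝ, 0 < C ∧ 0 < δ ∧ ∀ z, f z ≤ C * Real.exp (-δ * ‖z‖ ^ 2))
    (x : EuclideanSpace ℝ (Fin n)) :
    Tendsto (fun s : ℝ => expTransformS s f x ^ (1 - Real.exp (2 * s)))
        (𝓝[>] (0 : ℝ)) (𝓝 (polarFn f x)) ∧
      (⨆ z, ENNReal.ofReal (Real.exp ((inner ℝ x z : ℝ)) * f z))⁻¹ = polarFn f x :=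
  pointwise_limit_to_polar_general n f hc hpos hne hdec x

end
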